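/- Let t = (t_1,...,t_m) be a strictly increasing sequence in [n]. If A = (a^(1),...,a^(m+1)) is an (n,t)-compatible list of increasing parking functions, then Join(A) is an increasing parking completion of t; conversely, if p is an increasing parking completion of t, then Split(p), padded with empty lists to length m+1 if necessary, is (n,t)-compatible. Hence Join restricts to a bijection from (n,t)-compatible lists onto IPC_n(t). -/

import Mathlib

/-- An increasing parking function: a weakly increasing list `a` with
`1 ≤ a i ≤ i` (1-indexed). -/
def IsIPF (a : List ℕ) : Prop :=
  a.Pairwise (· ≤ ·) ∧ ∀ i (h : i < a.length), 1 ≤ a.get ⟨i, h⟩ ∧ a.get ⟨i, h⟩ ≤ i + 1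

/-- `Join`: concatenate a list of (increasing) parking functions, shifting the
`i`-th block up by `L (i-1) + i - 1`. -/
def Join : List (List ℕ) → List ℕ
  | [] => []
  | a :: A => a ++ (Join A).map (· + (a.length + 1))

open Classical in
/-- Fuel-driven implementation of `Split`; on weakly increasing lists of
positive integers the fuel `p.sum + 1` used in `Split` always suffices. -/
noncomputable def SplitAux : ℕ → List ℕ → List (List ℕ)
  | 0, _ => []
  | fuel + 1, p =>
    if p = [] then []
    else
      let k := Nat.findGreatest (fun k => IsIPF (p.take k)) p.length
      let q := p.drop k
      if q = [] then [p.take k]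
      else p.take k :: SplitAux fuel (q.map (· - (k + 1)))

/-- `Split`, the inverse of `Join`: repeatedly extract the longest prefix that
is an increasing parking function and shift the remainder down. -/
noncomputable def Split (p : List ℕ) : List (List ℕ) :=
  SplitAux (p.sum + 1) p

/-!
Write `L_r` for the total length of the first `r` blocks of `A`, blocks counted from `0`. `Join`
shifts block `r` by `L_r + r`, so an entry of `Join A` at position `i` in block `r` lies between
`L_r + r + 1` and `i + r + 1`. In particular the entry right after a block `a` exceeds `|a| + 1`,
which no IPF can do at position `|a|`; this fixes where the first block ends and makes `Join`
injective.

Counting the spots `≤ X` gives `#{u ≤ X} + #{t ≤ X} = X`, hence `X < u_i` iff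
`X ≤ i + #{t ≤ X}`. For `X = i + r` this says `t_r ≤ i + r` (with `t` indexed from `1`), which
is the compatibility inequality `t_r - r ≤ L_r` when `i = L_r`. So the upper bound turns
compatibility of `A` into `Join A ≤ u` entrywise, and the lower bound at the block starts of
`Split p` (whose blocks reassemble to `p`, the last one nonempty) turns `p ≤ u` into
compatibility.
-/

theorem List.Pairwise.getElem_le_iff_lt_countP {α : Type*} [LinearOrder α] {v : List α}
    (hv : v.Pairwise (· ≤ ·)) {i : ℕ} (hi : i < v.length) (x : α) :
    v[i] ≤ x ↔ i < v.countP (· ≤ x) := by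
  have hsplit : v.countP (· ≤ x) =
      (v.take i).countP (· ≤ x) + (v.drop i).countP (· ≤ x) := by
    rw [← List.countP_append, List.take_append_drop]
  have hlen : (v.take i).countP (· ≤ x) ≤ i :=
    List.countP_le_length.trans (List.length_take_le _ _)
  have hdrop := hv.drop (i := i)
  rw [List.drop_eq_getElem_cons hi, List.pairwise_cons] at hdrop
  rw [hsplit, List.drop_eq_getElem_cons hi, List.countP_cons]
  constructor
  · intro hx
    have htake : (v.take i).countP (· ≤ x) = i := by
      rw [List.countP_eq_length.2, List.length_take_of_le hi.le]
      intro y hy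
      have hi_mem : v[i] ∈ v.drop i := by
        rw [List.drop_eq_getElem_cons hi]; exact List.mem_cons_self
      simpa using (hv.rel_of_mem_take_of_mem_drop hy hi_mem).trans hx
    simp [hx, htake]
  · intro hlt
    by_contra! hx
    have hzero : (v.drop (i + 1)).countP (· ≤ x) = 0 :=
      List.countP_eq_zero.2 fun y hy => by simpa using hx.trans_le (hdrop.1 y hy)
    simp only [hzero, hx.not_ge, decide_false, Bool.false_eq_true, ↓reduceIte, add_zero] at hlt
    omega

theorem List.Pairwise.getElem_add_sub_le {v : List ℕ} (hv : v.Pairwise (· < ·)) {i j : ℕ}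
    (hij : i ≤ j) (hj : j < v.length) : v[i] + (j - i) ≤ v[j] := by
  induction j, hij using Nat.le_induction with
  | base => simp
  | succ j hij ih =>
    have := List.pairwise_iff_getElem.1 hv j (j + 1) (by omega) hj (Nat.lt_succ_self j)
    have := ih (by omega)
    omega

theorem List.sum_map_sub_lt {l : List ℕ} {c : ℕ} (hc : 0 < c) (hl : ∀ x ∈ l, 0 < x)
    (hne : l ≠ []) :
    (l.map (· - c)).sum < l.sum := by
  have hne' : 0 < l.length := List.length_pos_iff.2 hne
  simpa using List.sum_lt_sum (· - c) id (fun x _ => Nat.sub_le x c)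
    ⟨_, List.getElem_mem hne', Nat.sub_lt (hl _ (List.getElem_mem hne')) hc⟩

theorem IsIPF.getElem_le {a : List ℕ} (h : IsIPF a) {i : ℕ} (hi : i < a.length) :
    a[i] ≤ i + 1 :=
  (h.2 i hi).2

theorem IsIPF.one_le_of_mem {a : List ℕ} (h : IsIPF a) {x : ℕ} (hx : x ∈ a) : 1 ≤ x := by
  obtain ⟨i, hi, rfl⟩ := List.getElem_of_mem hx
  exact (h.2 i hi).1

theorem IsIPF.le_length_of_mem {a : List ℕ} (h : IsIPF a) {x : ℕ} (hx : x ∈ a) :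
    x ≤ a.length := by
  obtain ⟨i, hi, rfl⟩ := List.getElem_of_mem hx
  exact (h.getElem_le hi).trans hi

theorem isIPF_nil : IsIPF [] :=
  ⟨List.Pairwise.nil, fun _ h => absurd h (Nat.not_lt_zero _)⟩

/-- `L_r` in the paper. -/
def blockStart (A : List (List ℕ)) (r : ℕ) : ℕ :=
  ((A.take r).map List.length).sum

@[simp] theorem blockStart_zero (A : List (List ℕ)) : blockStart A 0 = 0 := by
  simp [blockStart]

@[simp] theorem blockStart_cons_succ (a : List ℕ) (A : List (List ℕ)) (r : ℕ) :
    blockStart (a :: A) (r + 1) = a.length + blockStart A r := by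
  simp [blockStart]

theorem blockStart_of_length_le {A : List (List ℕ)} {r : ℕ} (h : A.length ≤ r) :
    blockStart A r = (A.map List.length).sum := by
  rw [blockStart, List.take_of_length_le h]

theorem blockStart_append_replicate_nil (A : List (List ℕ)) (k r : ℕ) :
    blockStart (A ++ List.replicate k []) r = blockStart A r := by
  simp [blockStart, List.take_append, List.take_replicate]

theorem length_join (A : List (List ℕ)) : (Join A).length = (A.map List.length).sum := by
  induction A with
  | nil => rfl
  | cons a A ih => simp [Join, ih]

theorem join_append_replicate_nil (A : List (List ℕ)) (k : ℕ) :
    Join (A ++ List.replicate k []) = Join A := by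
  induction A with
  | nil => induction k with
    | zero => rfl
    | succ k ih => simpa [Join, List.replicate_succ] using ih
  | cons a A ih => simp [Join, ih]

section Join

variable {A : List (List ℕ)}

theorem one_le_of_mem_join (hA : ∀ a ∈ A, IsIPF a) {x : ℕ} (hx : x ∈ Join A) : 1 ≤ x := by
  induction A generalizing x with
  | nil => simp [Join] at hx
  | cons a A ih =>
    rw [Join, List.mem_append, List.mem_map] at hx
    rcases hx with hx | ⟨y, -, rfl⟩
    · exact (hA a List.mem_cons_self).one_le_of_mem hx
    · omega

theorem pairwise_join (hA : ∀ a ∈ A, IsIPF a) : (Join A).Pairwise (· ≤ ·) := by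
  induction A with
  | nil => exact List.Pairwise.nil
  | cons a A ih =>
    have ha := hA a List.mem_cons_self
    rw [Join, List.pairwise_append, List.pairwise_map]
    refine ⟨ha.1, (ih fun b hb => hA b (List.mem_cons_of_mem _ hb)).imp (by omega), ?_⟩
    intro x hx y hy
    obtain ⟨z, -, rfl⟩ := List.mem_map.1 hy
    have := ha.le_length_of_mem hx
    omega

theorem exists_getElem_join_le (hA : ∀ a ∈ A, IsIPF a) {i : ℕ} (hi : i < (Join A).length) :
    ∃ r < A.length, blockStart A r ≤ i ∧ (Join A)[i] ≤ i + r + 1 := by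
  induction A generalizing i with
  | nil => simp [Join] at hi
  | cons a A ih =>
    have ha := hA a List.mem_cons_self
    simp only [Join, List.length_append, List.length_map] at hi ⊢
    by_cases hia : i < a.length
    · refine ⟨0, by simp, by simp, ?_⟩
      rw [List.getElem_append_left hia]
      exact ha.getElem_le hia
    · obtain ⟨r, hr, hstart, hle⟩ :=
        ih (fun b hb => hA b (List.mem_cons_of_mem _ hb)) (i := i - a.length) (by omega)
      refine ⟨r + 1, by simpa using hr, by simp only [blockStart_cons_succ]; omega, ?_⟩
      rw [List.getElem_append_right (by omega), List.getElem_map]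
      omega

theorem blockStart_add_lt_getElem_join (hA : ∀ a ∈ A, IsIPF a) {r : ℕ}
    (hr : blockStart A r < (Join A).length) : blockStart A r + r < (Join A)[blockStart A r] := by
  induction A generalizing r with
  | nil => simp [Join] at hr
  | cons a A ih =>
    rcases r with _ | r
    · simpa [Nat.lt_iff_add_one_le] using one_le_of_mem_join hA (List.getElem_mem hr)
    · simp only [blockStart_cons_succ, Join, List.length_append, List.length_map] at hr ⊢
      rw [List.getElem_append_right (by omega), List.getElem_map]
      have := ih (fun b hb => hA b (List.mem_cons_of_mem _ hb)) (r := r) (by omega)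
      simp only [Nat.add_sub_cancel_left] at this ⊢
      omega

end Join

theorem IsIPF.length_le_of_append_eq {a b l l' : List ℕ} (hb : IsIPF b)
    (hl : ∀ x ∈ l, a.length + 1 < x) (h : a ++ l = b ++ l') : b.length ≤ a.length := by
  by_contra! hlt
  have hal : a.length < (a ++ l).length := by rw [h, List.length_append]; omega
  have hl0 : 0 < l.length := by rw [List.length_append] at hal; omega
  have hlhs : (a ++ l)[a.length] = l[0] := by simp
  have hrhs : (a ++ l)[a.length] = b[a.length] := by
    simp only [h]; exact List.getElem_append_left hlt
  have := hl _ (List.getElem_mem hl0)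
  have := hb.getElem_le hlt
  omega

theorem IsIPF.eq_of_append_eq {a b l l' : List ℕ} (ha : IsIPF a) (hb : IsIPF b)
    (hl : ∀ x ∈ l, a.length + 1 < x) (hl' : ∀ x ∈ l', b.length + 1 < x)
    (h : a ++ l = b ++ l') : a = b ∧ l = l' :=
  List.append_inj h (le_antisymm (ha.length_le_of_append_eq hl' h.symm)
    (hb.length_le_of_append_eq hl h))

theorem join_inj {A B : List (List ℕ)} (hA : ∀ a ∈ A, IsIPF a) (hB : ∀ b ∈ B, IsIPF b)
    (hlen : A.length = B.length) (h : Join A = Join B) : A = B := by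
  induction A generalizing B with
  | nil => exact (List.length_eq_zero_iff.1 hlen.symm).symm
  | cons a A ih =>
    obtain _ | ⟨b, B⟩ := B
    · simp at hlen
    have shifted_gt {c : List ℕ} {C : List (List ℕ)} (hC : ∀ d ∈ C, IsIPF d) :
        ∀ x ∈ (Join C).map (· + (c.length + 1)), c.length + 1 < x := by
      intro x hx
      obtain ⟨y, hy, rfl⟩ := List.mem_map.1 hx
      have := one_le_of_mem_join hC hy
      omega
    have hA' : ∀ c ∈ A, IsIPF c := fun c hc => hA c (List.mem_cons_of_mem _ hc)
    have hB' : ∀ c ∈ B, IsIPF c := fun c hc => hB c (List.mem_cons_of_mem _ hc)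
    obtain ⟨rfl, htail⟩ := (hA a List.mem_cons_self).eq_of_append_eq (hB b List.mem_cons_self)
      (shifted_gt hA') (shifted_gt hB') h
    have hJ : Join A = Join B := List.map_injective_iff.2 (add_left_injective _) htail
    rw [ih hA' hB' (by simpa using hlen) hJ]

theorem isIPF_take_succ {p : List ℕ} {k : ℕ} (hp : p.Pairwise (· ≤ ·)) (hk : k < p.length)
    (h : IsIPF (p.take k)) (h1 : 1 ≤ p[k]) (h2 : p[k] ≤ k + 1) : IsIPF (p.take (k + 1)) := by
  refine ⟨hp.sublist (List.take_sublist _ _), fun i hi => ?_⟩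
  simp only [List.length_take] at hi
  simp only [List.get_eq_getElem, List.getElem_take]
  rcases Nat.lt_or_ge i k with hik | hik
  · simpa using h.2 i (by simp only [List.length_take, lt_inf_iff]; omega)
  · obtain rfl : i = k := by omega
    exact ⟨h1, h2⟩

section Split

-- matches the decidability instance that `SplitAux` uses in `Nat.findGreatest`
open Classical

noncomputable def longestIPFPrefixLength (p : List ℕ) : ℕ :=
  Nat.findGreatest (fun k => IsIPF (p.take k)) p.length

theorem isIPF_take_longestIPFPrefixLength (p : List ℕ) :
    IsIPF (p.take (longestIPFPrefixLength p)) :=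
  Nat.findGreatest_spec (P := fun k => IsIPF (p.take k)) (Nat.zero_le _) (by simpa using isIPF_nil)

theorem longestIPFPrefixLength_add_two_le {p : List ℕ} (hp : p.Pairwise (· ≤ ·))
    (hpos : ∀ x ∈ p, 1 ≤ x) (hk : longestIPFPrefixLength p < p.length) :
    longestIPFPrefixLength p + 2 ≤ p[longestIPFPrefixLength p] := by
  by_contra! hlt
  exact Nat.findGreatest_is_greatest (P := fun k => IsIPF (p.take k))
    (k := longestIPFPrefixLength p + 1) (Nat.lt_succ_self _) hk
    (isIPF_take_succ hp hk (isIPF_take_longestIPFPrefixLength p) (hpos _ (List.getElem_mem _))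
      (by omega))

theorem splitAux_succ (fuel : ℕ) {p : List ℕ} (hp : p ≠ []) :
    SplitAux (fuel + 1) p =
      if p.drop (longestIPFPrefixLength p) = [] then [p]
      else p.take (longestIPFPrefixLength p) :: SplitAux fuel
        ((p.drop (longestIPFPrefixLength p)).map (· - (longestIPFPrefixLength p + 1))) := by
  rw [SplitAux, if_neg hp]
  unfold longestIPFPrefixLength
  dsimp only
  split_ifs with hq
  · rw [List.take_of_length_le (List.drop_eq_nil_iff.1 hq)]
  · rfl

end Split

/-- The last condition says that `B` does not end with an empty block. -/
def IsIPFDecomposition (p : List ℕ) (B : List (List ℕ)) : Prop :=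
  Join B = p ∧ (∀ b ∈ B, IsIPF b) ∧ ∀ r < B.length, blockStart B r < p.length

theorem isIPFDecomposition_singleton {p : List ℕ} (hp : IsIPF p) (hne : p ≠ []) :
    IsIPFDecomposition p [p] :=
  ⟨by simp [Join], by simpa using hp, by simpa using List.length_pos_iff.2 hne⟩

theorem IsIPFDecomposition.cons {b q : List ℕ} {B : List (List ℕ)} (hb : IsIPF b)
    (hB : IsIPFDecomposition q B) (hq : q ≠ []) :
    IsIPFDecomposition (b ++ q.map (· + (b.length + 1))) (b :: B) := by
  obtain ⟨hJ, hIPF, hstart⟩ := hB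
  refine ⟨by rw [Join, hJ], List.forall_mem_cons.2 ⟨hb, hIPF⟩, ?_⟩
  rintro (_ | r) hr
  · simpa using Or.inr (List.length_pos_iff.2 hq)
  · simpa using hstart r (by simpa using hr)

theorem isIPFDecomposition_splitAux (fuel : ℕ) {p : List ℕ} (hp : p.Pairwise (· ≤ ·))
    (hpos : ∀ x ∈ p, 1 ≤ x) (hfuel : p.sum < fuel) :
    IsIPFDecomposition p (SplitAux fuel p) := by
  induction fuel generalizing p with
  | zero => omega
  | succ fuel ih =>
    rcases eq_or_ne p [] with rfl | hne
    · exact ⟨by simp [SplitAux, Join], by simp [SplitAux], by simp [SplitAux]⟩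
    have hIPF := isIPF_take_longestIPFPrefixLength p
    have hbig := longestIPFPrefixLength_add_two_le hp hpos
    rw [splitAux_succ fuel hne]
    generalize longestIPFPrefixLength p = k at hIPF hbig ⊢
    split_ifs with hq
    · rw [List.take_of_length_le (List.drop_eq_nil_iff.1 hq)] at hIPF
      exact isIPFDecomposition_singleton hIPF hne
    have hklt : k < p.length := by simpa using hq
    have hq_ge : ∀ x ∈ p.drop k, k + 2 ≤ x := by
      have hdrop := hp.drop (i := k)
      rw [List.drop_eq_getElem_cons hklt, List.pairwise_cons] at hdrop
      rw [List.drop_eq_getElem_cons hklt, List.forall_mem_cons]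
      exact ⟨hbig hklt, fun x hx => (hbig hklt).trans (hdrop.1 x hx)⟩
    have hsum : ((p.drop k).map (· - (k + 1))).sum < fuel := by
      have := List.sum_map_sub_lt (c := k + 1) (by omega)
        (fun x hx => by have := hq_ge x hx; omega) hq
      have := List.sum_take_add_sum_drop p k
      omega
    have hdec := ih (p := (p.drop k).map (· - (k + 1)))
      ((hp.sublist (List.drop_sublist _ _)).map _ fun _ _ h => Nat.sub_le_sub_right h _)
      (by simp only [List.mem_map]; rintro _ ⟨x, hx, rfl⟩; have := hq_ge x hx; omega) hsum
    have hrestore :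
        ((p.drop k).map (· - (k + 1))).map (· + ((p.take k).length + 1)) = p.drop k := by
      rw [List.length_take_of_le hklt.le, List.map_map]
      refine (List.map_congr_left fun x hx => ?_).trans (List.map_id _)
      have := hq_ge x hx
      show x - (k + 1) + (k + 1) = x
      omega
    have := hdec.cons hIPF (by simpa using hq)
    rwa [hrestore, List.take_append_drop] at this

theorem isIPFDecomposition_split {p : List ℕ} (hp : p.Pairwise (· ≤ ·))
    (hpos : ∀ x ∈ p, 1 ≤ x) : IsIPFDecomposition p (Split p) :=
  isIPFDecomposition_splitAux _ hp hpos (Nat.lt_succ_self _)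

def unoccupied (n : ℕ) (t : List ℕ) : List ℕ :=
  (List.range' 1 n).filter (fun x => decide (x ∉ t))

def IsIPCompletion (n : ℕ) (t p : List ℕ) : Prop :=
  p.length = n - t.length ∧ p.Pairwise (· ≤ ·) ∧
    ∀ i < n - t.length, 1 ≤ p.getD i 0 ∧ p.getD i 0 ≤ (unoccupied n t).getD i 0

def IsCompatible (n : ℕ) (t : List ℕ) (A : List (List ℕ)) : Prop :=
  A.length = t.length + 1 ∧ (∀ a ∈ A, IsIPF a) ∧
    (∀ j < t.length, t.getD j 0 - (j + 1) ≤ blockStart A (j + 1)) ∧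
    (A.map List.length).sum = n - t.length

section Completion

variable {n : ℕ} {t : List ℕ}

theorem le_of_mem_unoccupied {x : ℕ} (hx : x ∈ unoccupied n t) : x ≤ n := by
  simp only [unoccupied, List.mem_filter, List.mem_range'_1] at hx
  omega

theorem pairwise_unoccupied (n : ℕ) (t : List ℕ) : (unoccupied n t).Pairwise (· ≤ ·) :=
  ((List.pairwise_lt_range' _).filter _).imp le_of_lt

theorem countP_unoccupied_add_countP (ht : t.Nodup)
    (ht_mem : ∀ x ∈ t, 1 ≤ x ∧ x ≤ n) {X : ℕ} (hX : X ≤ n) :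
    (unoccupied n t).countP (· ≤ X) + t.countP (· ≤ X) = X := by
  have hu : (unoccupied n t).countP (· ≤ X) = (List.range' 1 X).countP (fun x => x ∉ t) := by
    have hsplit : List.range' 1 n = List.range' 1 X ++ List.range' (1 + X) (n - X) := by
      rw [List.range'_append_1, Nat.add_sub_cancel' hX]
    rw [unoccupied, List.countP_filter, hsplit, List.countP_append,
      (List.countP_eq_zero (l := List.range' (1 + X) _)).2 (by simp +contextual; omega),
      add_zero]
    refine List.countP_congr fun x hx => ?_
    simp [show x ≤ X by rw [List.mem_range'_1] at hx; omega]
  have ht : t.countP (· ≤ X) = (List.range' 1 X).countP (fun x => x ∈ t) := by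
    rw [List.countP_eq_length_filter, List.countP_eq_length_filter]
    refine List.Perm.length_eq ((List.perm_ext_iff_of_nodup (ht.filter _)
      ((List.nodup_range' _).filter _)).2 fun x => ?_)
    simp only [List.mem_filter, List.mem_range'_1, decide_eq_true_eq]
    constructor
    · rintro ⟨h1, h2⟩; exact ⟨by have := ht_mem x h1; omega, h1⟩
    · rintro ⟨h1, h2⟩; exact ⟨h2, by omega⟩
  have hpart := List.length_eq_countP_add_countP (fun x => decide (x ∈ t)) (l := List.range' 1 X)
  simp only [List.length_range', decide_eq_true_eq] at hpart
  omega

theorem length_unoccupied (ht : t.Nodup) (ht_mem : ∀ x ∈ t, 1 ≤ x ∧ x ≤ n) :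
    (unoccupied n t).length = n - t.length := by
  have h := countP_unoccupied_add_countP ht ht_mem le_rfl
  rw [List.countP_eq_length.2 fun x hx => by simpa using le_of_mem_unoccupied hx,
    List.countP_eq_length.2 fun x hx => by simpa using (ht_mem x hx).2] at h
  omega

theorem lt_getElem_unoccupied_iff (ht : t.Nodup) (ht_mem : ∀ x ∈ t, 1 ≤ x ∧ x ≤ n)
    {i : ℕ} (hi : i < (unoccupied n t).length) {X : ℕ} (hX : X ≤ n) :
    X < (unoccupied n t)[i] ↔ X ≤ i + t.countP (· ≤ X) := by
  have hcount := countP_unoccupied_add_countP ht ht_mem hX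
  have := (pairwise_unoccupied n t).getElem_le_iff_lt_countP hi X
  omega

theorem isIPCompletion_join (ht_sorted : t.Pairwise (· < ·))
    (ht_mem : ∀ x ∈ t, 1 ≤ x ∧ x ≤ n) {A : List (List ℕ)} (hA : IsCompatible n t A) :
    IsIPCompletion n t (Join A) := by
  obtain ⟨hlen, hIPF, hbound, hsum⟩ := hA
  have hJlen : (Join A).length = n - t.length := by rw [length_join, hsum]
  refine ⟨hJlen, pairwise_join hIPF, fun i hi => ?_⟩
  have hiJ : i < (Join A).length := by omega
  have hiu : i < (unoccupied n t).length := by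
    rw [length_unoccupied (ht_sorted.imp ne_of_lt) ht_mem]; omega
  rw [List.getD_eq_getElem _ _ hiJ, List.getD_eq_getElem _ _ hiu]
  refine ⟨one_le_of_mem_join hIPF (List.getElem_mem _), ?_⟩
  obtain ⟨r, hr, hstart, hle⟩ := exists_getElem_join_le hIPF hiJ
  suffices i + r < (unoccupied n t)[i] by omega
  rw [lt_getElem_unoccupied_iff (ht_sorted.imp ne_of_lt) ht_mem hiu (by omega)]
  rcases r with _ | j
  · omega
  have hj : j < t.length := by omega
  have htj := hbound j hj
  rw [List.getD_eq_getElem _ _ hj] at htj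
  have := ((ht_sorted.imp le_of_lt).getElem_le_iff_lt_countP hj (i + (j + 1))).1 (by omega)
  omega

theorem IsIPCompletion.isIPFDecomposition {p : List ℕ}
    (hp : IsIPCompletion n t p) : IsIPFDecomposition p (Split p) := by
  refine isIPFDecomposition_split hp.2.1 fun x hx => ?_
  obtain ⟨i, hi, rfl⟩ := List.getElem_of_mem hx
  have := (hp.2.2 i (hp.1 ▸ hi)).1
  rwa [List.getD_eq_getElem _ _ hi] at this

theorem IsIPCompletion.succ_le_countP_blockStart (ht : t.Nodup)
    (ht_mem : ∀ x ∈ t, 1 ≤ x ∧ x ≤ n) {p : List ℕ} {B : List (List ℕ)}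
    (hp : IsIPCompletion n t p) (hB : IsIPFDecomposition p B) {j : ℕ} (hj : j + 1 < B.length) :
    j + 1 ≤ t.countP (· ≤ blockStart B (j + 1) + j + 1) := by
  obtain ⟨rfl, hIPF, hstart⟩ := hB
  have hL := hstart _ hj
  have hpL := blockStart_add_lt_getElem_join hIPF hL
  generalize blockStart B (j + 1) = L at *
  have hLu : L < (unoccupied n t).length := by
    rw [length_unoccupied ht ht_mem, ← hp.1]; exact hL
  have hpu := (hp.2.2 L (hp.1 ▸ hL)).2
  rw [List.getD_eq_getElem _ _ hL, List.getD_eq_getElem _ _ hLu] at hpu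
  have hun := le_of_mem_unoccupied (List.getElem_mem hLu)
  have := (lt_getElem_unoccupied_iff ht ht_mem hLu (X := L + j + 1) (by omega)).1 (by omega)
  omega

theorem isCompatible_split_pad (ht_sorted : t.Pairwise (· < ·))
    (ht_mem : ∀ x ∈ t, 1 ≤ x ∧ x ≤ n) {p : List ℕ} (hp : IsIPCompletion n t p) :
    IsCompatible n t (Split p ++ List.replicate (t.length + 1 - (Split p).length) []) := by
  have hcount := fun j (hj : j + 1 < (Split p).length) =>
    hp.succ_le_countP_blockStart (ht_sorted.imp ne_of_lt) ht_mem hp.isIPFDecomposition hj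
  obtain ⟨hJ, hIPF, -⟩ := hp.isIPFDecomposition
  generalize Split p = B at *
  subst hJ
  have htotal : (B.map List.length).sum = n - t.length := by rw [← length_join, hp.1]
  have hBlen : B.length ≤ t.length + 1 := by
    by_contra! h
    have := hcount t.length h
    have := List.countP_le_length (l := t)
      (p := (· ≤ blockStart B (t.length + 1) + t.length + 1))
    omega
  refine ⟨by simp only [List.length_append, List.length_replicate]; omega, ?_, fun j hj => ?_,
    by simpa using htotal⟩
  · simp only [List.mem_append, List.mem_replicate]
    rintro a (ha | ⟨-, rfl⟩)
    exacts [hIPF a ha, isIPF_nil]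
  · rw [blockStart_append_replicate_nil, List.getD_eq_getElem _ _ hj]
    by_cases hjB : j + 1 < B.length
    · have := ((ht_sorted.imp le_of_lt).getElem_le_iff_lt_countP hj _).2 (hcount j hjB)
      omega
    · rw [blockStart_of_length_le (by omega), htotal]
      have := ht_sorted.getElem_add_sub_le (show j ≤ t.length - 1 by omega) (by omega)
      have := (ht_mem _ (List.getElem_mem (show t.length - 1 < t.length by omega))).2
      omega

end Completion

/-- Theorem 4.4: for a strictly increasing list `t` of taken spots in `[n]`,
`Join` maps `(n,t)`-compatible lists of increasing parking functions to
increasing parking completions of `t`; `Split` of an increasing parking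
completion, padded with empty lists to length `m + 1`, is `(n,t)`-compatible;
and `Join` restricts to a bijection between the two sets. -/
theorem stmt5 (n m : ℕ) (t : List ℕ) (ht_len : t.length = m)
    (ht_sorted : t.Pairwise (· < ·)) (ht_mem : ∀ x ∈ t, 1 ≤ x ∧ x ≤ n) :
    -- `u`: increasing enumeration of the unoccupied spots `[n] \ t`
    let u : List ℕ := (List.range' 1 n).filter (fun x => decide (x ∉ t))
    -- increasing parking completions of `t` in `[n]`
    let ipc : Set (List ℕ) := {p : List ℕ | p.length = n - m ∧ p.Pairwise (· ≤ ·) ∧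
      ∀ i < n - m, 1 ≤ p.getD i 0 ∧ p.getD i 0 ≤ u.getD i 0}
    -- `(n,t)`-compatible lists of increasing parking functions
    let compat : Set (List (List ℕ)) := {A : List (List ℕ) | A.length = m + 1 ∧
      (∀ a ∈ A, IsIPF a) ∧
      (∀ j < m, t.getD j 0 - (j + 1) ≤ ((A.take (j + 1)).map List.length).sum) ∧
      (A.map List.length).sum = n - m}
    (∀ A ∈ compat, Join A ∈ ipc) ∧
    (∀ p ∈ ipc, (Split p ++ List.replicate (m + 1 - (Split p).length) []) ∈ compat) ∧
    Set.BijOn Join compat ipc := by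
  intro u ipc compat
  subst ht_len
  have hJoin : ∀ A ∈ compat, Join A ∈ ipc :=
    fun _ hA => isIPCompletion_join ht_sorted ht_mem hA
  have hSplit : ∀ p ∈ ipc,
      Split p ++ List.replicate (t.length + 1 - (Split p).length) [] ∈ compat :=
    fun _ hp => isCompatible_split_pad ht_sorted ht_mem hp
  refine ⟨hJoin, hSplit, hJoin,
    fun A hA B hB h => join_inj hA.2.1 hB.2.1 (hA.1.trans hB.1.symm) h,
    fun p hp => ⟨_, hSplit p hp, ?_⟩⟩
  rw [join_append_replicate_nil]
  exact (IsIPCompletion.isIPFDecomposition hp).1
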